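/- arXiv:2603.14720 — 2 statements merged into one kernel-verified Lean document; each statement's English description precedes it below -/
import Mathlib

section
/- Let k ≥ 1 be an integer and let a : Fin (k+1) → ℝ. Define σ on ℂ × ℂ × ℂ × ℂˣ by σ(x, y, z, u) = ((−1)^{k+1}·conj(y)/conj(u)^{k+1}, conj(x)/conj(u)^{k+1}, −conj(z)/conj(u)², −1/conj(u)). Then: (i) σ ∘ σ is the identity; (ii) if x·y = ∏_{i=1}^{k+1}(z − a_i·u), then the four components of σ(x,y,z,u) satisfy the same equation x′·y′ = ∏_{i=1}^{k+1}(z′ − a_i·u′). -/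
open Complex

/-- The real structure of the projective model of the `A_k` twistor space on the
chart `u ≠ 0`:
`σ(x,y,z,u) = ((-1)^{k+1} conj y / conj u^{k+1}, conj x / conj u^{k+1},
 -conj z / conj u², -1 / conj u)`. -/
noncomputable def twistorRealStructure (k : ℕ) (p : ℂ × ℂ × ℂ × ℂ) :
    ℂ × ℂ × ℂ × ℂ :=
  ((-1 : ℂ) ^ (k + 1) * (starRingEnd ℂ) p.2.1 / ((starRingEnd ℂ) p.2.2.2) ^ (k + 1),
   (starRingEnd ℂ) p.1 / ((starRingEnd ℂ) p.2.2.2) ^ (k + 1),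
   -(starRingEnd ℂ) p.2.2.1 / ((starRingEnd ℂ) p.2.2.2) ^ 2,
   -1 / (starRingEnd ℂ) p.2.2.2)

/-!
Writing `c = conj u`, each linear form `z - a u` with `a` real is carried by `σ` to
`-conj (z - a u) / c²`, while `x y` is carried to `(-1)^{k+1} conj (x y) / c^{2(k+1)}`;
so a product of `k + 1` such forms transforms exactly as `x y` does.
-/

namespace twistorRealStructure

variable (k : ℕ) {x y z u : ℂ}

theorem apply_apply (hu : u ≠ 0) :
    twistorRealStructure k (twistorRealStructure k (x, y, z, u)) = (x, y, z, u) := by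
  simp only [twistorRealStructure, map_div₀, map_mul, map_pow, map_neg, map_one, conj_conj,
    Prod.mk.injEq]
  refine ⟨?_, ?_, ?_, ?_⟩ <;> field_simp
  all_goals rw [neg_pow (1 / u), div_pow, one_pow]; field_simp

theorem sub_ofReal_mul (r : ℝ) (hu : u ≠ 0) :
    (twistorRealStructure k (x, y, z, u)).2.2.1 - r * (twistorRealStructure k (x, y, z, u)).2.2.2 =
      -(starRingEnd ℂ u ^ 2)⁻¹ * starRingEnd ℂ (z - r * u) := by
  have hcu : starRingEnd ℂ u ≠ 0 := by simpa using hu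
  simp only [twistorRealStructure, map_sub, map_mul, conj_ofReal]
  field_simp
  ring

theorem fst_mul_snd :
    (twistorRealStructure k (x, y, z, u)).1 * (twistorRealStructure k (x, y, z, u)).2.1 =
      (-(starRingEnd ℂ u ^ 2)⁻¹) ^ (k + 1) * starRingEnd ℂ (x * y) := by
  simp only [twistorRealStructure, map_mul]
  ring

theorem preserves_model (a : Fin (k + 1) → ℝ) (hu : u ≠ 0)
    (h : x * y = ∏ i, (z - (a i : ℂ) * u)) :
    (twistorRealStructure k (x, y, z, u)).1 * (twistorRealStructure k (x, y, z, u)).2.1 =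
      ∏ i, ((twistorRealStructure k (x, y, z, u)).2.2.1 -
        (a i : ℂ) * (twistorRealStructure k (x, y, z, u)).2.2.2) := by
  simp only [sub_ofReal_mul k _ hu, Finset.prod_mul_distrib, Finset.prod_const,
    Finset.card_univ, Fintype.card_fin, ← map_prod, fst_mul_snd, h]

end twistorRealStructure

theorem stmt8_general (k : ℕ) (a : Fin (k + 1) → ℝ) :
    (∀ x y z u : ℂ, u ≠ 0 →
      twistorRealStructure k (twistorRealStructure k (x, y, z, u)) = (x, y, z, u)) ∧
    (∀ x y z u : ℂ, u ≠ 0 →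
      x * y = ∏ i, (z - (a i : ℂ) * u) →
      (twistorRealStructure k (x, y, z, u)).1 *
          (twistorRealStructure k (x, y, z, u)).2.1 =
        ∏ i, ((twistorRealStructure k (x, y, z, u)).2.2.1 -
          (a i : ℂ) * (twistorRealStructure k (x, y, z, u)).2.2.2)) :=
  ⟨fun _ _ _ _ hu => twistorRealStructure.apply_apply k hu,
    fun _ _ _ _ hu h => twistorRealStructure.preserves_model k a hu h⟩

/-- The map `σ` is an involution on the locus `u ≠ 0`, and it preserves the
projective model `x·y = ∏_{i=1}^{k+1}(z - a_i·u)` of the twistor space of an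
ALE gravitational instanton of type `A_k`. -/
theorem stmt8 (k : ℕ) (hk : 1 ≤ k) (a : Fin (k + 1) → ℝ) :
    (∀ x y z u : ℂ, u ≠ 0 →
      twistorRealStructure k (twistorRealStructure k (x, y, z, u)) = (x, y, z, u)) ∧
    (∀ x y z u : ℂ, u ≠ 0 →
      x * y = ∏ i, (z - (a i : ℂ) * u) →
      (twistorRealStructure k (x, y, z, u)).1 *
          (twistorRealStructure k (x, y, z, u)).2.1 =
        ∏ i, ((twistorRealStructure k (x, y, z, u)).2.2.1 -
          (a i : ℂ) * (twistorRealStructure k (x, y, z, u)).2.2.2)) :=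
  stmt8_general k a
end

section
/- Let n ≥ 1 be an integer, let a : Fin (2n) → ℝ, fix i with 0 ≤ i ≤ 2n, let λ ∈ ℝ with λ ≠ a_j for all j, and let c ∈ ℂ with c ≠ 0. Define x(u) = c·(∏_{j=1}^{i}(λ − a_j))·u^i, y(u) = c^{−1}·(∏_{j=i+1}^{2n}(λ − a_j))·u^{2n−i}, z(u) = λ·u. Then: (1) for every u ∈ ℂ one has x(u)·y(u) = ∏_{j=1}^{2n}(z(u) − a_j·u); (2) the curve is compatible with the real structure, i.e. for every u ≠ 0 one has x(−1/conj u) = conj(y(u))/conj(u)^{2n}, y(−1/conj u) = conj(x(u))/conj(u)^{2n}, and z(−1/conj u) = −conj(z(u))/conj(u)², if and only if |c|² = (−1)^i · (∏_{j=i+1}^{2n}(λ − a_j)) / (∏_{j=1}^{i}(λ − a_j)). -/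
/-!
Both `x` and `y` are monomials in `u`, so substituting `u ↦ -1 / conj u` turns each reality
equation into one identity between coefficients, `(-1)ⁱ c P = conj (c⁻¹ Q)` with
`P = ∏_{j ≤ i} (λ - a_j)` and `Q = ∏_{j > i} (λ - a_j)`; multiplying by `conj c` this is
`(-1)ⁱ |c|² P = Q`. The `y`-equation is the conjugate of the `x`-equation because the total
degree `2n` is even, and the `z`-equation holds because `λ` is real. The surface equation is
`P Q = ∏_j (λ - a_j)`.
-/

open Complex ComplexConjugate Finset

theorem prod_Icc_one_mul_prod_Icc_add_one {M : Type*} [CommMonoid M] (f : ℕ → M) {i m : ℕ}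
    (h : i ≤ m) : (∏ j ∈ Icc 1 i, f j) * ∏ j ∈ Icc (i + 1) m, f j = ∏ j ∈ Icc 1 m, f j := by
  simp only [Icc_add_one_left_eq_Ioc]
  exact prod_Ioc_consecutive f (Nat.zero_le i) h

theorem monomial_neg_inv_conj_eq_iff (α β : ℂ) (k l : ℕ) :
    (∀ u : ℂ, u ≠ 0 →
        α * (-1 / conj u) ^ k = conj (β * u ^ l) / conj u ^ (k + l)) ↔
      (-1) ^ k * α = conj β := by
  constructor
  · intro h
    simpa [mul_comm] using h 1 one_ne_zero
  · intro h u hu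
    have hw : conj u ≠ 0 := (map_ne_zero _).2 hu
    rw [map_mul, map_pow, ← h, div_pow, neg_pow, pow_add]
    field_simp

theorem prod_mul_sub_mul_eq_prod_mul_prod_mul_pow (a : ℕ → ℝ) (lam : ℝ) (u : ℂ) {i m : ℕ}
    (hi : i ≤ m) :
    ∏ j ∈ Icc 1 m, ((lam : ℂ) * u - a j * u) =
      ((∏ j ∈ Icc 1 i, (lam - a j)) * ∏ j ∈ Icc (i + 1) m, (lam - a j) : ℝ) * u ^ m := by
  rw [prod_Icc_one_mul_prod_Icc_add_one _ hi]
  simp only [← sub_mul, prod_mul_distrib, prod_const, Nat.card_Icc, Nat.add_sub_cancel,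
    ofReal_prod, ofReal_sub]

theorem ofReal_mul_neg_inv_conj (r : ℝ) {u : ℂ} (hu : u ≠ 0) :
    r * (-1 / conj u) = -conj (r * u) / conj u ^ 2 := by
  have hw : conj u ≠ 0 := (map_ne_zero _).2 hu
  rw [map_mul, conj_ofReal]
  field_simp

theorem neg_one_pow_mul_eq_conj_symm {α β : ℂ} {k l : ℕ} (hkl : Even (k + l))
    (h : (-1) ^ k * α = conj β) : (-1) ^ l * β = conj α := by
  have hsign : ((-1 : ℂ) ^ l) * (-1) ^ k = 1 := by rw [← pow_add, add_comm, hkl.neg_one_pow]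
  have hconj : (-1) ^ k * conj α = β := by simpa using congrArg conj h
  rw [← hconj, ← mul_assoc, hsign, one_mul]

theorem neg_one_pow_mul_eq_conj_iff_symm {α β : ℂ} {k l : ℕ} (hkl : Even (k + l)) :
    (-1) ^ k * α = conj β ↔ (-1) ^ l * β = conj α :=
  ⟨neg_one_pow_mul_eq_conj_symm hkl, neg_one_pow_mul_eq_conj_symm (add_comm k l ▸ hkl)⟩

theorem neg_one_pow_mul_eq_conj_iff_normSq {c : ℂ} (hc : c ≠ 0) {p : ℝ} (hp : p ≠ 0) (q : ℝ)
    (k : ℕ) : (-1) ^ k * (c * p) = conj (c⁻¹ * q) ↔ normSq c = (-1) ^ k * q / p := by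
  have hsign : ((-1 : ℝ) ^ k) ^ 2 = 1 := by rw [← pow_mul, pow_mul', neg_one_sq, one_pow]
  have hlhs : conj c * ((-1) ^ k * (c * p)) = (((-1) ^ k * normSq c * p : ℝ) : ℂ) := by
    push_cast; rw [← mul_conj]; ring
  rw [map_mul, map_inv₀, conj_ofReal, eq_inv_mul_iff_mul_eq₀ ((map_ne_zero _).2 hc), hlhs,
    ofReal_inj, eq_div_iff hp]
  constructor <;> intro h
  · linear_combination (-1) ^ k * h - normSq c * p * hsign
  · linear_combination (-1) ^ k * h + q * hsign

theorem stmt14_general (n : ℕ) (a : ℕ → ℝ) (i : ℕ) (hi : i ≤ 2 * n)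
    (lam : ℝ) (hlam : ∀ j ∈ Finset.Icc 1 (2 * n), lam ≠ a j)
    (c : ℂ) (hc : c ≠ 0) (x y z : ℂ → ℂ)
    (hx : ∀ u : ℂ, x u =
      c * (∏ j ∈ Finset.Icc 1 i, ((lam : ℂ) - (a j : ℂ))) * u ^ i)
    (hy : ∀ u : ℂ, y u =
      c⁻¹ * (∏ j ∈ Finset.Icc (i + 1) (2 * n), ((lam : ℂ) - (a j : ℂ))) *
        u ^ (2 * n - i))
    (hz : ∀ u : ℂ, z u = (lam : ℂ) * u) :
    (∀ u : ℂ, x u * y u = ∏ j ∈ Finset.Icc 1 (2 * n), (z u - (a j : ℂ) * u)) ∧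
    ((∀ u : ℂ, u ≠ 0 →
        x (-1 / (starRingEnd ℂ) u) = (starRingEnd ℂ) (y u) / ((starRingEnd ℂ) u) ^ (2 * n) ∧
        y (-1 / (starRingEnd ℂ) u) = (starRingEnd ℂ) (x u) / ((starRingEnd ℂ) u) ^ (2 * n) ∧
        z (-1 / (starRingEnd ℂ) u) = -(starRingEnd ℂ) (z u) / ((starRingEnd ℂ) u) ^ 2) ↔
      Complex.normSq c =
        (-1 : ℝ) ^ i * (∏ j ∈ Finset.Icc (i + 1) (2 * n), (lam - a j)) /
          (∏ j ∈ Finset.Icc 1 i, (lam - a j))) := by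
  set P := ∏ j ∈ Icc 1 i, (lam - a j)
  set Q := ∏ j ∈ Icc (i + 1) (2 * n), (lam - a j)
  have hP : P ≠ 0 :=
    prod_ne_zero_iff.2 fun j hj => sub_ne_zero.2 (hlam j (Icc_subset_Icc le_rfl hi hj))
  have hx' : ∀ u, x u = c * P * u ^ i := by simpa [P] using hx
  have hy' : ∀ u, y u = c⁻¹ * Q * u ^ (2 * n - i) := by simpa [Q] using hy
  refine ⟨fun u => ?_, ?_⟩
  · rw [hz, prod_mul_sub_mul_eq_prod_mul_prod_mul_pow a lam u hi, hx', hy',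
      ← pow_mul_pow_sub u hi, ofReal_mul]
    field_simp
    ring
  · have hx_real : (∀ u : ℂ, u ≠ 0 → x (-1 / conj u) = conj (y u) / conj u ^ (2 * n)) ↔
        (-1) ^ i * (c * P) = conj (c⁻¹ * Q) := by
      simpa only [hx', hy', Nat.add_sub_cancel' hi] using
        monomial_neg_inv_conj_eq_iff (c * P) (c⁻¹ * Q) i (2 * n - i)
    have hy_real : (∀ u : ℂ, u ≠ 0 → y (-1 / conj u) = conj (x u) / conj u ^ (2 * n)) ↔
        (-1) ^ (2 * n - i) * (c⁻¹ * Q) = conj (c * P) := by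
      simpa only [hx', hy', Nat.sub_add_cancel hi] using
        monomial_neg_inv_conj_eq_iff (c⁻¹ * Q) (c * P) (2 * n - i) i
    have hz_real (u : ℂ) (hu : u ≠ 0) : z (-1 / conj u) = -conj (z u) / conj u ^ 2 := by
      simp only [hz, ofReal_mul_neg_inv_conj lam hu]
    have heven : Even (i + (2 * n - i)) := by rw [Nat.add_sub_cancel' hi]; exact even_two_mul n
    simp only [imp_and, forall_and]
    rw [hx_real, hy_real, ← neg_one_pow_mul_eq_conj_iff_symm heven,
      iff_true_intro hz_real, and_true, and_self]
    exact neg_one_pow_mul_eq_conj_iff_normSq hc hP Q i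

/-- Reality analysis for twistor lines through the exceptional component `C_i`:
the curve `x(u) = c·(∏_{j=1}^{i}(λ-a_j))·uⁱ`, `y(u) = c⁻¹·(∏_{j=i+1}^{2n}(λ-a_j))·u^{2n-i}`,
`z(u) = λ·u` lies on the projective model `x·y = ∏_{j=1}^{2n}(z - a_j·u)`, and it
is compatible with the real structure
`σ(x,y,z,u) = (conj y/conj u^{2n}, conj x/conj u^{2n}, -conj z/conj u², -1/conj u)`
if and only if `|c|² = (-1)^i (∏_{j=i+1}^{2n}(λ-a_j)) / (∏_{j=1}^{i}(λ-a_j))`. -/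
theorem stmt14 (n : ℕ) (hn : 1 ≤ n) (a : ℕ → ℝ) (i : ℕ) (hi : i ≤ 2 * n)
    (lam : ℝ) (hlam : ∀ j ∈ Finset.Icc 1 (2 * n), lam ≠ a j)
    (c : ℂ) (hc : c ≠ 0) (x y z : ℂ → ℂ)
    (hx : ∀ u : ℂ, x u =
      c * (∏ j ∈ Finset.Icc 1 i, ((lam : ℂ) - (a j : ℂ))) * u ^ i)
    (hy : ∀ u : ℂ, y u =
      c⁻¹ * (∏ j ∈ Finset.Icc (i + 1) (2 * n), ((lam : ℂ) - (a j : ℂ))) *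
        u ^ (2 * n - i))
    (hz : ∀ u : ℂ, z u = (lam : ℂ) * u) :
    (∀ u : ℂ, x u * y u = ∏ j ∈ Finset.Icc 1 (2 * n), (z u - (a j : ℂ) * u)) ∧
    ((∀ u : ℂ, u ≠ 0 →
        x (-1 / (starRingEnd ℂ) u) = (starRingEnd ℂ) (y u) / ((starRingEnd ℂ) u) ^ (2 * n) ∧
        y (-1 / (starRingEnd ℂ) u) = (starRingEnd ℂ) (x u) / ((starRingEnd ℂ) u) ^ (2 * n) ∧
        z (-1 / (starRingEnd ℂ) u) = -(starRingEnd ℂ) (z u) / ((starRingEnd ℂ) u) ^ 2) ↔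
      Complex.normSq c =
        (-1 : ℝ) ^ i * (∏ j ∈ Finset.Icc (i + 1) (2 * n), (lam - a j)) /
          (∏ j ∈ Finset.Icc 1 i, (lam - a j))) :=
  stmt14_general n a i hi lam hlam c hc x y z hx hy hz
end
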